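/- Let W = S_n ⋉ (ℤ/2ℤ)ⁿ be the Weyl group of type C_n acting on characters of M = (ℤ/2ℤ)ⁿ, and for 1 ≤ p ≤ n let δ_p be the character given by the product of the last p coordinates. Then δ_p(m_{ε_i ± ε_j}) = 1 if and only if either 1 ≤ i < j ≤ n−p or n−p+1 ≤ i < j ≤ n, and δ_p(m_{2ε_k}) = 1 if and only if 1 ≤ k ≤ n−p; hence the good roots for δ_p are Δ_{δ_p} = {±ε_i ± ε_j}_{1 ≤ i < j ≤ n−p} ∪ {±2ε_k}_{1 ≤ k ≤ n−p} ∪ {±ε_i ± ε_j}_{n−p+1 ≤ i < j ≤ n}, a root system of type C_{n−p} + D_p; the group W_{δ_p}⁰ = W(Δ_{δ_p}) equals W(C_{n−p}) × W(D_p); the stabilizer W_{δ_p} of δ_p in W equals W(C_{n−p}) × W(C_p); and the R-group R_{δ_p} = W_{δ_p}/W_{δ_p}⁰ is isomorphic to ℤ/2ℤ. -/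

import Mathlib

/-!
A signed permutation `w` fixes `δ_p` exactly when its permutation part preserves the last block
(test `w • δ_p = δ_p` on a single sign change). On the stabilizer, `w ↦ δ_p(sign part of w)` is
then a homomorphism onto `{±1}`, and its kernel is generated by the good reflections: a
block-preserving permutation is a product of transpositions inside the blocks, and a sign vector
with even product on the last block is a product of sign changes `s_{2ε_k}` in the first block and
of pairs `s_{ε_i+ε_j} s_{ε_i−ε_j}` inside the last block. Hence `W_{δ_p}⁰` is the kernel of a
surjection `W_{δ_p} → ℤ/2ℤ`.
-/

open Equiv

namespace Sp2n

/-- Precomposition with a permutation of the index set, as a multiplicative automorphism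
of `(Fin n → ℤˣ)`. -/
def permMulEquiv (n : ℕ) (σ : Equiv.Perm (Fin n)) :
    (Fin n → ℤˣ) ≃* (Fin n → ℤˣ) where
  toFun f := f ∘ σ
  invFun f := f ∘ σ.symm
  left_inv f := by funext i; simp
  right_inv f := by funext i; simp
  map_mul' f g := rfl

/-- The homomorphism `Perm (Fin n) →* MulAut (Fin n → ℤˣ)` giving the Weyl group of type
`C_n` as a semidirect product (signed permutations). -/
def permHom (n : ℕ) : Equiv.Perm (Fin n) →* MulAut (Fin n → ℤˣ) where
  toFun σ := permMulEquiv n σ⁻¹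
  map_one' := by
    apply MulEquiv.ext; intro f; funext i
    simp [permMulEquiv]
  map_mul' σ τ := by
    apply MulEquiv.ext; intro f; funext i
    simp [permMulEquiv, mul_inv_rev]

@[simp] lemma permHom_apply (n : ℕ) (σ : Equiv.Perm (Fin n)) (f : Fin n → ℤˣ) :
    (permHom n σ) f = f ∘ ⇑σ⁻¹ := rfl

/-- The Weyl group `W = S_n ⋉ (ℤ/2ℤ)ⁿ` of type `C_n`, realized as signed permutations. -/
abbrev W (n : ℕ) := SemidirectProduct (Fin n → ℤˣ) (Equiv.Perm (Fin n)) (permHom n)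

/-- Characters of `M = (ℤ/2ℤ)ⁿ` (realized as `Fin n → ℤˣ`), with values in `ℤˣ = {±1}`. -/
def MChar (n : ℕ) := (Fin n → ℤˣ) → ℤˣ

instance (n : ℕ) : SMul (Equiv.Perm (Fin n)) (MChar n) :=
  ⟨fun σ δ => fun lam => δ (fun i => lam (σ i))⟩

@[simp] lemma perm_smul_apply (n : ℕ) (σ : Equiv.Perm (Fin n)) (δ : MChar n)
    (lam : Fin n → ℤˣ) : (σ • δ) lam = δ (fun i => lam (σ i)) := rfl

instance (n : ℕ) : MulAction (Equiv.Perm (Fin n)) (MChar n) where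
  one_smul δ := by funext lam; simp
  mul_smul σ τ δ := by funext lam; simp [Equiv.Perm.mul_apply]

/-- The Weyl group acts on characters of `M` through its permutation part. -/
instance (n : ℕ) : MulAction (W n) (MChar n) :=
  MulAction.compHom _ (SemidirectProduct.rightHom)

/-- The character `δ_p` of `M`: the product of the last `p` coordinates. -/
def deltaP (n p : ℕ) : MChar n :=
  fun lam => ∏ j : Fin n, if n - p ≤ (j : ℕ) then lam j else 1

/-- The element `m_{ε_i ± ε_j}` of `M`: `−1` in coordinates `i` and `j`, `1` elsewhere. -/
def mPM (n : ℕ) (i j : Fin n) : Fin n → ℤˣ :=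
  fun t => if t = i ∨ t = j then -1 else 1

/-- The element `m_{2ε_k}` of `M`: `−1` in coordinate `k`, `1` elsewhere. -/
def mLong (n : ℕ) (k : Fin n) : Fin n → ℤˣ :=
  fun t => if t = k then -1 else 1

/-- The coordinate vector `ε_i`. -/
def eVec (n : ℕ) (i : Fin n) : Fin n → ℤ := Pi.single i 1

/-- The roots of type `C_n`: `±ε_i ± ε_j` (`i ≠ j`) and `±2ε_k`. -/
def CRoots (n : ℕ) : Set (Fin n → ℤ) :=
  {v | (∃ i j : Fin n, i ≠ j ∧
          (v = eVec n i + eVec n j ∨ v = eVec n i - eVec n j ∨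
           v = -(eVec n i + eVec n j) ∨ v = -(eVec n i - eVec n j))) ∨
       (∃ k : Fin n, v = 2 • eVec n k ∨ v = -(2 • eVec n k))}

/-- The element `m_α ∈ M` attached to a root `α`: `−1` on the support of `α`. -/
def mOf (n : ℕ) (v : Fin n → ℤ) : Fin n → ℤˣ :=
  fun t => if v t = 0 then 1 else -1

/-- `i` and `j` lie in the same block: both in `{1,…,n−p}` or both in `{n−p+1,…,n}`
(0-indexed: both `< n−p` or both `≥ n−p`). -/
def sameBlock (n p : ℕ) (i j : Fin n) : Prop :=
  ((i : ℕ) < n - p ∧ (j : ℕ) < n - p) ∨ (n - p ≤ (i : ℕ) ∧ n - p ≤ (j : ℕ))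

/-- The explicit set `{±ε_i±ε_j}_{i<j≤n−p} ∪ {±2ε_k}_{k≤n−p} ∪ {±ε_i±ε_j}_{n−p<i<j}`,
a root system of type `C_{n−p} + D_p`. -/
def explicitGoodRoots (n p : ℕ) : Set (Fin n → ℤ) :=
  {v | (∃ i j : Fin n, i ≠ j ∧ sameBlock n p i j ∧
          (v = eVec n i + eVec n j ∨ v = eVec n i - eVec n j ∨
           v = -(eVec n i + eVec n j) ∨ v = -(eVec n i - eVec n j))) ∨
       (∃ k : Fin n, (k : ℕ) < n - p ∧ (v = 2 • eVec n k ∨ v = -(2 • eVec n k)))}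

/-- The reflection `s_{ε_i − ε_j}` (for `plus = false`) resp. `s_{ε_i + ε_j}`
(for `plus = true`) as a signed permutation. -/
def sShort (n : ℕ) (i j : Fin n) (plus : Bool) : W n :=
  ⟨if plus then mPM n i j else 1, Equiv.swap i j⟩

/-- The reflection `s_{2ε_k}` as a signed permutation (a sign change at `k`). -/
def sLong (n : ℕ) (k : Fin n) : W n := ⟨mLong n k, 1⟩

/-- The reflections through the good roots for `δ_p` (the roots `α` with
`δ_p(m_α) = 1`). -/
def goodReflections (n p : ℕ) : Set (W n) :=
  {w | ∃ i j : Fin n, i ≠ j ∧ deltaP n p (mPM n i j) = 1 ∧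
        (w = sShort n i j true ∨ w = sShort n i j false)} ∪
  {w | ∃ k : Fin n, deltaP n p (mLong n k) = 1 ∧ w = sLong n k}

/-- A signed permutation preserves the two blocks of coordinates. -/
def blockPreserving (n p : ℕ) (w : W n) : Prop :=
  ∀ i : Fin n, (n - p ≤ (i : ℕ) ↔ n - p ≤ ((w.right i : Fin n) : ℕ))

/-- A signed permutation has an even number of sign changes on the last block. -/
def evenLastSigns (n p : ℕ) (w : W n) : Prop :=
  (∏ j : Fin n, if n - p ≤ (j : ℕ) then w.left j else 1) = 1

theorem _root_.Equiv.iff_swap_apply_of_iff {α : Type*} [DecidableEq α] (P : α → Prop) {x y : α}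
    (h : P x ↔ P y) (z : α) : P z ↔ P (swap x y z) := by
  rw [swap_apply_def]
  split_ifs with hx hy
  · exact hx ▸ h
  · exact hy ▸ h.symm
  · rfl

theorem _root_.Equiv.Perm.mem_closure_swap_of_forall_iff {α : Type*} [Fintype α] [DecidableEq α]
    (P : α → Prop) {σ : Perm α} (hσ : ∀ x, P x ↔ P (σ x)) :
    σ ∈ Subgroup.closure {τ | ∃ x y, x ≠ y ∧ (P x ↔ P y) ∧ τ = swap x y} := by
  induction h : σ.support.card using Nat.strong_induction_on generalizing σ with
  | _ m ih =>
  by_cases hσ1 : σ = 1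
  · exact hσ1 ▸ one_mem _
  obtain ⟨x, hx⟩ : ∃ x, σ x ≠ x := not_forall.mp fun h => hσ1 (Perm.ext h)
  rw [← swap_mul_self_mul x (σ x) σ]
  refine mul_mem (Subgroup.subset_closure ⟨x, σ x, hx.symm, hσ x, rfl⟩) ?_
  exact ih _ (h ▸ Perm.card_support_swap_mul hx)
    (fun z => (hσ z).trans (iff_swap_apply_of_iff P (hσ x) _)) rfl

theorem mem_of_prod_ite_eq_one {ι : Type*} [Fintype ι] [DecidableEq ι]
    {K : Subgroup (ι → ℤˣ)} (P : ι → Prop) [DecidablePred P] (k₀ : ι)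
    (hout : ∀ i, ¬ P i → Pi.mulSingle i (-1) ∈ K)
    (hin : ∀ i, P i → i ≠ k₀ → Pi.mulSingle i (-1) * Pi.mulSingle k₀ (-1) ∈ K)
    {f : ι → ℤˣ} (hf : ∏ i, (if P i then f i else 1) = 1) : f ∈ K := by
  -- pair each sign change in `P` with one at `k₀`; the extra signs at `k₀` cancel by `hf`
  have hdecomp : f = ∏ i, Pi.mulSingle i (f i) * Pi.mulSingle k₀ (if P i then f i else 1) := by
    have hk₀ : ∏ i, Pi.mulSingle (M := fun _ => ℤˣ) k₀ (if P i then f i else 1) = 1 :=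
      (map_prod (MonoidHom.mulSingle (fun _ => ℤˣ) k₀) _ _).symm.trans (by simp [hf])
    rw [Finset.prod_mul_distrib, Finset.univ_prod_mulSingle, hk₀, mul_one]
  rw [hdecomp]
  refine Subgroup.prod_mem _ fun i _ => ?_
  rcases Int.units_eq_one_or (f i) with h | h <;> rw [h]
  · simp
  by_cases hi : P i
  · rw [if_pos hi]
    by_cases hik : i = k₀
    · subst hik; rw [← Pi.mulSingle_mul]; simp
    · exact hin i hi hik
  · rw [if_neg hi, Pi.mulSingle_one, mul_one]; exact hout i hi

section

variable {n p : ℕ}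

lemma sameBlock_iff {i j : Fin n} :
    sameBlock n p i j ↔ (n - p ≤ (i : ℕ) ↔ n - p ≤ (j : ℕ)) := by
  unfold sameBlock; omega

lemma deltaP_mul (f g : Fin n → ℤˣ) : deltaP n p (f * g) = deltaP n p f * deltaP n p g := by
  simp only [deltaP, Pi.mul_apply, ← Finset.prod_mul_distrib]
  exact Finset.prod_congr rfl fun j _ => by split_ifs <;> simp

lemma deltaP_mulSingle (k : Fin n) (x : ℤˣ) :
    deltaP n p (Pi.mulSingle k x) = if n - p ≤ (k : ℕ) then x else 1 := by
  unfold deltaP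
  rw [Fintype.prod_eq_single k fun j hj => by simp [hj]]
  simp

lemma mLong_eq_mulSingle (k : Fin n) : mLong n k = Pi.mulSingle k (-1) := by
  funext t; simp [mLong, Pi.mulSingle_apply]

lemma mPM_eq_mulSingle_mul_mulSingle {i j : Fin n} (hij : i ≠ j) :
    mPM n i j = Pi.mulSingle i (-1) * Pi.mulSingle j (-1) := by
  funext t; by_cases hti : t = i <;> by_cases htj : t = j <;> simp_all [mPM]

lemma deltaP_mPM_eq_one_iff {i j : Fin n} (hij : i ≠ j) :
    deltaP n p (mPM n i j) = 1 ↔ sameBlock n p i j := by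
  rw [mPM_eq_mulSingle_mul_mulSingle hij, deltaP_mul, deltaP_mulSingle, deltaP_mulSingle,
    sameBlock_iff]
  split_ifs <;> simp_all
  omega

lemma deltaP_mLong_eq_one_iff (k : Fin n) : deltaP n p (mLong n k) = 1 ↔ (k : ℕ) < n - p := by
  rw [mLong_eq_mulSingle, deltaP_mulSingle]
  split_ifs <;> simp <;> omega

lemma mOf_eq_mPM {i j : Fin n} (hij : i ≠ j) {v : Fin n → ℤ}
    (hv : v = eVec n i + eVec n j ∨ v = eVec n i - eVec n j ∨
      v = -(eVec n i + eVec n j) ∨ v = -(eVec n i - eVec n j)) :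
    mOf n v = mPM n i j := by
  funext t
  rcases hv with rfl | rfl | rfl | rfl <;>
    by_cases hti : t = i <;> by_cases htj : t = j <;> simp_all [mOf, mPM, eVec]

lemma mOf_eq_mLong {k : Fin n} {v : Fin n → ℤ} (hv : v = 2 • eVec n k ∨ v = -(2 • eVec n k)) :
    mOf n v = mLong n k := by
  funext t
  rcases hv with rfl | rfl <;> by_cases htk : t = k <;> simp_all [mOf, mLong, eVec]

lemma goodRoots_eq_explicitGoodRoots :
    {v ∈ CRoots n | deltaP n p (mOf n v) = 1} = explicitGoodRoots n p := by
  ext v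
  simp only [CRoots, explicitGoodRoots, Set.mem_ofPred_eq]
  constructor
  · rintro ⟨⟨i, j, hij, hv⟩ | ⟨k, hv⟩, hδ⟩
    · rw [mOf_eq_mPM hij hv, deltaP_mPM_eq_one_iff hij] at hδ
      exact Or.inl ⟨i, j, hij, hδ, hv⟩
    · rw [mOf_eq_mLong hv, deltaP_mLong_eq_one_iff] at hδ
      exact Or.inr ⟨k, hδ, hv⟩
  · rintro (⟨i, j, hij, hb, hv⟩ | ⟨k, hk, hv⟩)
    · rw [mOf_eq_mPM hij hv, deltaP_mPM_eq_one_iff hij]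
      exact ⟨Or.inl ⟨i, j, hij, hv⟩, hb⟩
    · rw [mOf_eq_mLong hv, deltaP_mLong_eq_one_iff]
      exact ⟨Or.inr ⟨k, hv⟩, hk⟩

lemma deltaP_comp_perm {σ : Perm (Fin n)}
    (hσ : ∀ i : Fin n, n - p ≤ (i : ℕ) ↔ n - p ≤ (σ i : ℕ)) (f : Fin n → ℤˣ) :
    deltaP n p (f ∘ σ) = deltaP n p f := by
  unfold deltaP
  exact (Finset.prod_congr rfl fun j _ => if_congr (hσ j) rfl rfl).trans
    (Equiv.prod_comp σ fun j => if n - p ≤ (j : ℕ) then f j else 1)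

lemma mem_stabilizer_deltaP_iff (w : W n) :
    w ∈ MulAction.stabilizer (W n) (deltaP n p) ↔ blockPreserving n p w := by
  rw [MulAction.mem_stabilizer_iff]
  change w.right • deltaP n p = deltaP n p ↔ _
  refine ⟨fun h i => ?_, fun h => funext fun f => deltaP_comp_perm h f⟩
  have hi := congrFun h (Pi.mulSingle (w.right i) (-1))
  change deltaP n p (Pi.mulSingle (w.right i) (-1) ∘ w.right) = _ at hi
  rw [Pi.mulSingle_comp_equiv, symm_apply_apply, deltaP_mulSingle, deltaP_mulSingle] at hi
  split_ifs at hi <;> simp_all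
  omega

def lastSign (n p : ℕ) : MulAction.stabilizer (W n) (deltaP n p) →* ℤˣ where
  toFun w := deltaP n p w.1.left
  map_one' := by simp [deltaP]
  map_mul' a b := by
    change deltaP n p (a.1.left * (b.1.left ∘ ⇑a.1.right⁻¹)) = _
    rw [deltaP_mul, deltaP_comp_perm (σ := a.1.right⁻¹)
      ((mem_stabilizer_deltaP_iff _).1 (inv_mem a.2))]

lemma lastSign_surjective (hp1 : 1 ≤ p) (hpn : p ≤ n) : Function.Surjective (lastSign n p) := by
  have hn : n - 1 < n := by omega
  have hsign : lastSign n p ⟨SemidirectProduct.inl (Pi.mulSingle ⟨n - 1, hn⟩ (-1)),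
      (mem_stabilizer_deltaP_iff _).2 fun _ => Iff.rfl⟩ = -1 := by
    change deltaP n p (Pi.mulSingle _ _) = _
    rw [deltaP_mulSingle, if_pos (by simp only; omega)]
  intro u
  rcases Int.units_eq_one_or u with rfl | rfl
  · exact ⟨1, map_one _⟩
  · exact ⟨_, hsign⟩

lemma inl_mem_closure_goodReflections (hp1 : 1 ≤ p) (hpn : p ≤ n) {f : Fin n → ℤˣ}
    (hf : deltaP n p f = 1) :
    SemidirectProduct.inl f ∈ Subgroup.closure (goodReflections n p) := by
  have hn : n - 1 < n := by omega
  refine mem_of_prod_ite_eq_one (K := (Subgroup.closure _).comap SemidirectProduct.inl)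
    (fun j : Fin n => n - p ≤ (j : ℕ)) ⟨n - 1, hn⟩ (fun i hi => ?_) (fun i hi hik => ?_) hf
  · refine Subgroup.subset_closure (Or.inr ⟨i, (deltaP_mLong_eq_one_iff i).2 (by omega), ?_⟩)
    rw [sLong, mLong_eq_mulSingle]; rfl
  · have hδ : deltaP n p (mPM n i ⟨n - 1, hn⟩) = 1 :=
      (deltaP_mPM_eq_one_iff hik).2 (sameBlock_iff.2 (iff_of_true hi (by simp only; omega)))
    have hprod : SemidirectProduct.inl (mPM n i ⟨n - 1, hn⟩) =
        sShort n i ⟨n - 1, hn⟩ true * sShort n i ⟨n - 1, hn⟩ false := by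
      ext <;> simp [sShort]
    rw [Subgroup.mem_comap, ← mPM_eq_mulSingle_mul_mulSingle hik, hprod]
    exact mul_mem (Subgroup.subset_closure (Or.inl ⟨_, _, hik, hδ, Or.inl rfl⟩))
      (Subgroup.subset_closure (Or.inl ⟨_, _, hik, hδ, Or.inr rfl⟩))

lemma inr_mem_closure_goodReflections {σ : Perm (Fin n)}
    (hσ : ∀ i : Fin n, n - p ≤ (i : ℕ) ↔ n - p ≤ (σ i : ℕ)) :
    SemidirectProduct.inr σ ∈ Subgroup.closure (goodReflections n p) := by
  refine (Subgroup.closure_le ((Subgroup.closure _).comap SemidirectProduct.inr)).2 ?_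
    (Perm.mem_closure_swap_of_forall_iff _ hσ)
  rintro _ ⟨x, y, hxy, hb, rfl⟩
  exact Subgroup.subset_closure
    (Or.inl ⟨x, y, hxy, (deltaP_mPM_eq_one_iff hxy).2 (sameBlock_iff.2 hb), Or.inr rfl⟩)

lemma mem_map_ker_lastSign_iff {w : W n} :
    w ∈ (lastSign n p).ker.map (MulAction.stabilizer (W n) (deltaP n p)).subtype ↔
      blockPreserving n p w ∧ evenLastSigns n p w := by
  refine ⟨?_, fun h => ⟨⟨w, (mem_stabilizer_deltaP_iff w).2 h.1⟩, h.2, rfl⟩⟩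
  rintro ⟨w, hw, rfl⟩
  exact ⟨(mem_stabilizer_deltaP_iff _).1 w.2, hw⟩

lemma goodReflections_subset_map_ker_lastSign :
    goodReflections n p ⊆
      (lastSign n p).ker.map (MulAction.stabilizer (W n) (deltaP n p)).subtype := by
  rintro w (⟨i, j, hij, hδ, hw⟩ | ⟨k, hδ, rfl⟩)
  · have hswap : ∀ b, blockPreserving n p (sShort n i j b) := fun _ =>
      iff_swap_apply_of_iff _ (sameBlock_iff.1 ((deltaP_mPM_eq_one_iff hij).1 hδ))
    rcases hw with rfl | rfl
    · exact mem_map_ker_lastSign_iff.2 ⟨hswap true, hδ⟩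
    · exact mem_map_ker_lastSign_iff.2 ⟨hswap false, by simp [evenLastSigns, sShort]⟩
  · exact mem_map_ker_lastSign_iff.2 ⟨fun _ => Iff.rfl, hδ⟩

theorem closure_goodReflections_eq (hp1 : 1 ≤ p) (hpn : p ≤ n) :
    Subgroup.closure (goodReflections n p) =
      (lastSign n p).ker.map (MulAction.stabilizer (W n) (deltaP n p)).subtype := by
  refine le_antisymm ((Subgroup.closure_le _).2 goodReflections_subset_map_ker_lastSign) ?_
  rintro _ ⟨w, hw, rfl⟩
  rw [Subgroup.coe_subtype, ← SemidirectProduct.inl_left_mul_inr_right w.1]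
  exact mul_mem (inl_mem_closure_goodReflections hp1 hpn hw)
    (inr_mem_closure_goodReflections ((mem_stabilizer_deltaP_iff _).1 w.2))

end

/-- For `W = S_n ⋉ (ℤ/2ℤ)ⁿ` of type `C_n` and `δ_p` the product of the last `p`
coordinates of `M = (ℤ/2ℤ)ⁿ` (`1 ≤ p ≤ n`):
`δ_p(m_{ε_i±ε_j}) = 1` iff `i, j` lie in the same block, and `δ_p(m_{2ε_k}) = 1` iff `k`
lies in the first block; hence the good roots for `δ_p` are
`{±ε_i±ε_j}_{i<j≤n−p} ∪ {±2ε_k}_{k≤n−p} ∪ {±ε_i±ε_j}_{n−p<i<j}` (type `C_{n−p}+D_p`);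
the group `W_{δ_p}⁰ = W(Δ_{δ_p})` equals `W(C_{n−p}) × W(D_p)` (block-preserving signed
permutations with an even number of sign changes on the last block); the stabilizer
`W_{δ_p}` equals `W(C_{n−p}) × W(C_p)` (block-preserving signed permutations); and the
R-group `R_{δ_p} = W_{δ_p}/W_{δ_p}⁰` is isomorphic to `ℤ/2ℤ` (i.e. `W_{δ_p}⁰` has
index `2` in `W_{δ_p}`). -/
theorem good_roots_and_Rgroup_for_deltaP (n p : ℕ) (hp1 : 1 ≤ p) (hpn : p ≤ n) :
    (∀ i j : Fin n, i < j →
        (deltaP n p (mPM n i j) = 1 ↔ sameBlock n p i j)) ∧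
    (∀ k : Fin n, deltaP n p (mLong n k) = 1 ↔ (k : ℕ) < n - p) ∧
    ({v ∈ CRoots n | deltaP n p (mOf n v) = 1} = explicitGoodRoots n p) ∧
    ((Subgroup.closure (goodReflections n p) : Set (W n)) =
        {w : W n | blockPreserving n p w ∧ evenLastSigns n p w}) ∧
    ((MulAction.stabilizer (W n) (deltaP n p) : Set (W n)) =
        {w : W n | blockPreserving n p w}) ∧
    (Subgroup.closure (goodReflections n p) ≤
        MulAction.stabilizer (W n) (deltaP n p)) ∧
    ((Subgroup.closure (goodReflections n p)).subgroupOf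
        (MulAction.stabilizer (W n) (deltaP n p))).index = 2 := by
  rw [closure_goodReflections_eq hp1 hpn]
  refine ⟨fun i j hij => deltaP_mPM_eq_one_iff hij.ne, deltaP_mLong_eq_one_iff,
    goodRoots_eq_explicitGoodRoots, Set.ext fun _ => mem_map_ker_lastSign_iff,
    Set.ext mem_stabilizer_deltaP_iff, Subgroup.map_subtype_le _, ?_⟩
  rw [← Subgroup.comap_subtype,
    Subgroup.comap_map_eq_self_of_injective (Subgroup.subtype_injective _), Subgroup.index_ker,
    MonoidHom.range_eq_top_of_surjective _ (lastSign_surjective hp1 hpn),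
    Subgroup.card_top, Nat.card_eq_fintype_card, Fintype.card_units_int]

end Sp2n
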